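/- arXiv:2601.11112 — 9 statements merged into one kernel-verified Lean document; each statement's English description precedes it below -/
import Mathlib

section
/- Let X be a T0 topological space in which every compact saturated subset is closed. Then X is a T1 space, and consequently every compact subset of X is closed (i.e., X is a KC-space). -/
/-- A subset of a topological space is *saturated* if it equals the intersection of all
open sets containing it. -/
def IsSaturatedSet {Y : Type*} [TopologicalSpace Y] (A : Set Y) : Prop :=
  A = ⋂₀ {U : Set Y | IsOpen U ∧ A ⊆ U}

/-- A space is a *strong R-space* if for every family `𝒦` of compact saturated sets and
every open `U` with `⋂₀ 𝒦 ⊆ U`, some finite subfamily `ℱ ⊆ 𝒦` satisfies `⋂₀ ℱ ⊆ U`. -/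
def IsStrongRSpace (Y : Type*) [TopologicalSpace Y] : Prop :=
  ∀ 𝒦 : Set (Set Y), (∀ K ∈ 𝒦, IsCompact K ∧ IsSaturatedSet K) →
    ∀ U : Set Y, IsOpen U → ⋂₀ 𝒦 ⊆ U → ∃ ℱ ⊆ 𝒦, ℱ.Finite ∧ ⋂₀ ℱ ⊆ U

/-- A space is *coherent* if the intersection of any two compact saturated sets is compact. -/
def IsCoherentSpace (Y : Type*) [TopologicalSpace Y] : Prop :=
  ∀ K₁ K₂ : Set Y, IsCompact K₁ → IsSaturatedSet K₁ → IsCompact K₂ → IsSaturatedSet K₂ →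
    IsCompact (K₁ ∩ K₂)

/-- A space is *well-filtered* if for every (nonempty) filtered family `𝒞` of compact
saturated sets and every open `U` with `⋂₀ 𝒞 ⊆ U`, there exists `K ∈ 𝒞` with `K ⊆ U`. -/
def IsWellFilteredSpace (Y : Type*) [TopologicalSpace Y] : Prop :=
  ∀ 𝒞 : Set (Set Y), 𝒞.Nonempty → (∀ K ∈ 𝒞, IsCompact K ∧ IsSaturatedSet K) →
    (∀ A ∈ 𝒞, ∀ B ∈ 𝒞, ∃ C ∈ 𝒞, C ⊆ A ∩ B) →
    ∀ U : Set Y, IsOpen U → ⋂₀ 𝒞 ⊆ U → ∃ K ∈ 𝒞, K ⊆ U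

/-- Upper closure of a set with respect to the specialization order
(`a ≤ y` iff `a ∈ closure {y}`). -/
def specUpperClosure {Y : Type*} [TopologicalSpace Y] (A : Set Y) : Set Y :=
  {y | ∃ a ∈ A, a ∈ closure {y}}

/-- A space is an *R-space* if whenever an intersection of upper closures of finite sets
is contained in an open set `U`, a finite subintersection is already contained in `U`. -/
def IsRSpace (Y : Type*) [TopologicalSpace Y] : Prop :=
  ∀ (ι : Type*) (F : ι → Set Y), (∀ i, (F i).Finite) → ∀ U : Set Y, IsOpen U →
    (⋂ i, specUpperClosure (F i)) ⊆ U →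
    ∃ A : Set ι, A.Finite ∧ (⋂ i ∈ A, specUpperClosure (F i)) ⊆ U

/-- The Smyth powerspace: the set of nonempty compact saturated subsets. -/
def SmythPow (Y : Type*) [TopologicalSpace Y] : Type _ :=
  {K : Set Y // K.Nonempty ∧ IsCompact K ∧ IsSaturatedSet K}

/-- The topology of the Smyth powerspace, generated by `□U = {K | K ⊆ U}` for `U` open. -/
instance SmythPow.instTopologicalSpace {Y : Type*} [TopologicalSpace Y] :
    TopologicalSpace (SmythPow Y) :=
  TopologicalSpace.generateFrom
    {S | ∃ U : Set Y, IsOpen U ∧ S = {K : SmythPow Y | K.1 ⊆ U}}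

/-- A space is *co-Noetherian* if every closed set is the closure of a finite set. -/
def IsCoNoetherian (Y : Type*) [TopologicalSpace Y] : Prop :=
  ∀ C : Set Y, IsClosed C → ∃ F : Set Y, F.Finite ∧ C = closure F

/-- The patch topology: generated by the open sets together with complements of
compact saturated sets. -/
def patchTop (Y : Type*) [TopologicalSpace Y] : TopologicalSpace Y :=
  TopologicalSpace.generateFrom
    ({U : Set Y | IsOpen U} ∪ {S : Set Y | ∃ K : Set Y, IsCompact K ∧ IsSaturatedSet K ∧ S = Kᶜ})

/-- The strong (Skula) topology: generated by the open sets together with the closed sets. -/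
def skulaTop (Y : Type*) [TopologicalSpace Y] : TopologicalSpace Y :=
  TopologicalSpace.generateFrom ({U : Set Y | IsOpen U} ∪ {C : Set Y | IsClosed C})

/-- A space is *locally hypercompact* if every point has, inside each open neighbourhood `U`,
a finite set `F ⊆ U` with the point in the interior of the upper closure of `F`. -/
def IsLocallyHypercompact (Y : Type*) [TopologicalSpace Y] : Prop :=
  ∀ x : Y, ∀ U : Set Y, IsOpen U → x ∈ U →
    ∃ F : Set Y, F.Finite ∧ F ⊆ U ∧ x ∈ interior (specUpperClosure F)

/-- `U ≪ V` for open sets: every open cover of `V` has a finite subfamily covering `U`. -/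
def wayBelowOpen {Y : Type*} [TopologicalSpace Y] (U V : Set Y) : Prop :=
  ∀ 𝒞 : Set (Set Y), (∀ W ∈ 𝒞, IsOpen W) → V ⊆ ⋃₀ 𝒞 → ∃ 𝒟 ⊆ 𝒞, 𝒟.Finite ∧ U ⊆ ⋃₀ 𝒟

/-- A space is *open well-filtered* if for every (nonempty) `≪`-filtered family `ℱ` of open
sets and every open `U` with `⋂₀ ℱ ⊆ U`, there is `V ∈ ℱ` with `V ⊆ U`. -/
def IsOpenWellFiltered (Y : Type*) [TopologicalSpace Y] : Prop :=
  ∀ ℱ : Set (Set Y), ℱ.Nonempty → (∀ W ∈ ℱ, IsOpen W) →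
    (∀ U₁ ∈ ℱ, ∀ U₂ ∈ ℱ, ∃ U₃ ∈ ℱ, wayBelowOpen U₃ U₁ ∧ wayBelowOpen U₃ U₂) →
    ∀ U : Set Y, IsOpen U → ⋂₀ ℱ ⊆ U → ∃ V ∈ ℱ, V ⊆ U

/-- Lower closure of a set in a preorder. -/
def lowerCloSet {L : Type*} [Preorder L] (A : Set L) : Set L := {x | ∃ a ∈ A, x ≤ a}

/-- `F` is a *cover* of the antichain `C`: `F` is a finite antichain with `C ⊆ ↓F`, and
for every finite `G` with `C ⊆ ↓G` one has `F ⊆ ↓G`. -/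
def IsCoverOf {L : Type*} [Preorder L] (F C : Set L) : Prop :=
  F.Finite ∧ IsAntichain (· ≤ ·) F ∧ C ⊆ lowerCloSet F ∧
    ∀ G : Set L, G.Finite → C ⊆ lowerCloSet G → F ⊆ lowerCloSet G

/-- Specialization order: `x ≤ y` iff `x ∈ closure {y}`. -/
def specLE {Y : Type*} [TopologicalSpace Y] (x y : Y) : Prop := x ∈ closure {y}

/-- Lower closure with respect to the specialization order. -/
def specLowerClosure {Y : Type*} [TopologicalSpace Y] (A : Set Y) : Set Y :=
  {x | ∃ a ∈ A, specLE x a}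

section

variable {Y : Type*} [TopologicalSpace Y]

lemma isSaturatedSet_iff_nhdsKer_eq {A : Set Y} : IsSaturatedSet A ↔ nhdsKer A = A := by
  rw [IsSaturatedSet, nhdsKer_def, eq_comm]

lemma isSaturatedSet_nhdsKer (A : Set Y) : IsSaturatedSet (nhdsKer A) :=
  isSaturatedSet_iff_nhdsKer_eq.2 (nhdsKer_nhdsKer A)

lemma isSaturatedSet_of_t1Space [T1Space Y] (A : Set Y) : IsSaturatedSet A :=
  isSaturatedSet_iff_nhdsKer_eq.2 (nhdsKer_eq_of_t1Space A)

/-- `nhdsKer {x}` is the set of points specializing to `x`; if it is closed it also contains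
the points `x` specializes to, and T0 identifies the two. -/
lemma t1Space_of_isClosed_nhdsKer_singleton [T0Space Y]
    (hclosed : ∀ x : Y, IsClosed (nhdsKer {x})) : T1Space Y := by
  refine t1Space_iff_specializes_imp_eq.2 fun x y hxy => ?_
  have hyx : y ⤳ x := mem_nhdsKer_singleton.1 <|
    (hclosed x).closure_subset_iff.2 subset_nhdsKer (specializes_iff_mem_closure.1 hxy)
  exact (hxy.antisymm hyx).eq

end

theorem stmt0 {X : Type*} [TopologicalSpace X] [T0Space X]
    (h : ∀ K : Set X, IsCompact K → IsSaturatedSet K → IsClosed K) :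
    T1Space X ∧ ∀ K : Set X, IsCompact K → IsClosed K := by
  have : T1Space X := t1Space_of_isClosed_nhdsKer_singleton fun x =>
    h _ isCompact_singleton.nhdsKer (isSaturatedSet_nhdsKer _)
  exact ⟨this, fun K hK => h K hK (isSaturatedSet_of_t1Space K)⟩
end

section
/- Every KC-space is a strong R-space. -/
/-- The closed sets of `𝒦` have no common point in the compact set `K₀ \ U`, so finitely
many of them already have none. -/
theorem IsCompact.exists_finite_subfamily_sInter_subset {X : Type*} [TopologicalSpace X]
    {𝒦 : Set (Set X)} (h𝒦 : ∀ K ∈ 𝒦, IsClosed K) {K₀ : Set X} (hK₀ : IsCompact K₀)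
    (hK₀𝒦 : K₀ ∈ 𝒦) {U : Set X} (hU : IsOpen U) (hsub : ⋂₀ 𝒦 ⊆ U) :
    ∃ ℱ ⊆ 𝒦, ℱ.Finite ∧ ⋂₀ ℱ ⊆ U := by
  by_contra! hne
  have hfinite : ∀ ℱ ⊆ 𝒦, ℱ.Finite → ((K₀ \ U) ∩ ⋂₀ ℱ).Nonempty := fun ℱ hℱ𝒦 hℱ => by
    obtain ⟨x, hx, hxU⟩ :=
      Set.not_subset.1 (hne (insert K₀ ℱ) (Set.insert_subset hK₀𝒦 hℱ𝒦) (hℱ.insert K₀))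
    rw [Set.sInter_insert] at hx
    exact ⟨x, ⟨hx.1, hxU⟩, hx.2⟩
  obtain ⟨x, ⟨-, hxU⟩, hx𝒦⟩ := (hK₀.diff hU).nonempty_inter_sInter h𝒦 hfinite
  exact hxU (hsub hx𝒦)

theorem stmt1 {X : Type*} [TopologicalSpace X]
    (h : ∀ K : Set X, IsCompact K → IsClosed K) : IsStrongRSpace X := by
  intro 𝒦 h𝒦 U hU hsub
  rcases 𝒦.eq_empty_or_nonempty with rfl | ⟨K₀, hK₀𝒦⟩
  · exact ⟨∅, Set.empty_subset _, Set.finite_empty, by simpa using hsub⟩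
  · exact (h𝒦 K₀ hK₀𝒦).1.exists_finite_subfamily_sInter_subset
      (fun K hK => h K (h𝒦 K hK).1) hK₀𝒦 hU hsub
end

section
/- Let X be a T0 topological space. If X is coherent and well-filtered, then X is a strong R-space. -/
/-!
The finite nonempty subintersections of `𝒦` form a filtered family with the same
intersection as `𝒦`. Arbitrary intersections of saturated sets are saturated, and coherence
makes finite intersections of compact saturated sets compact, so this family consists of compact
saturated sets. Well-filteredness then puts one of its members, a finite subintersection of `𝒦`,
inside `U`.
-/

open Set

section

variable {α : Type*}

def finiteSubInters (𝒦 : Set (Set α)) : Set (Set α) :=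
  {S | ∃ ℱ ⊆ 𝒦, ℱ.Finite ∧ ℱ.Nonempty ∧ S = ⋂₀ ℱ}

theorem subset_finiteSubInters (𝒦 : Set (Set α)) : 𝒦 ⊆ finiteSubInters 𝒦 :=
  fun K hK => ⟨{K}, singleton_subset_iff.2 hK, finite_singleton K, singleton_nonempty K,
    (sInter_singleton K).symm⟩

theorem sInter_finiteSubInters_subset (𝒦 : Set (Set α)) : ⋂₀ finiteSubInters 𝒦 ⊆ ⋂₀ 𝒦 :=
  sInter_subset_sInter (subset_finiteSubInters 𝒦)

theorem finiteSubInters_filtered (𝒦 : Set (Set α)) :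
    ∀ A ∈ finiteSubInters 𝒦, ∀ B ∈ finiteSubInters 𝒦, ∃ C ∈ finiteSubInters 𝒦, C ⊆ A ∩ B := by
  rintro _ ⟨ℱ₁, hℱ₁, hfin₁, hne₁, rfl⟩ _ ⟨ℱ₂, hℱ₂, hfin₂, -, rfl⟩
  exact ⟨_, ⟨ℱ₁ ∪ ℱ₂, union_subset hℱ₁ hℱ₂, hfin₁.union hfin₂, hne₁.inl, rfl⟩,
    (sInter_union ℱ₁ ℱ₂).subset⟩

end

section

variable {Y : Type*} [TopologicalSpace Y]

theorem isSaturatedSet_sInter {𝒦 : Set (Set Y)} (h𝒦 : ∀ K ∈ 𝒦, IsSaturatedSet K) :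
    IsSaturatedSet (⋂₀ 𝒦) := by
  refine Subset.antisymm (fun x hx V hV => hV.2 hx) fun x hx K hK => ?_
  rw [h𝒦 K hK]
  exact fun V hV => hx V ⟨hV.1, (sInter_subset_of_mem hK).trans hV.2⟩

theorem IsCoherentSpace.isCompact_sInter (hcoh : IsCoherentSpace Y) {ℱ : Set (Set Y)}
    (hfin : ℱ.Finite) (hne : ℱ.Nonempty) (hℱ : ∀ K ∈ ℱ, IsCompact K ∧ IsSaturatedSet K) :
    IsCompact (⋂₀ ℱ) := by
  induction ℱ, hfin using Set.Finite.induction_on with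
  | empty => exact absurd hne not_nonempty_empty
  | @insert K ℱ _ _ ih =>
    rw [sInter_insert]
    obtain ⟨hK, hKsat⟩ := hℱ K (mem_insert K ℱ)
    have hℱ' : ∀ L ∈ ℱ, IsCompact L ∧ IsSaturatedSet L :=
      fun L hL => hℱ L (mem_insert_of_mem K hL)
    rcases ℱ.eq_empty_or_nonempty with rfl | hℱne
    · simpa using hK
    · exact hcoh K _ hK hKsat (ih hℱne hℱ') (isSaturatedSet_sInter fun L hL => (hℱ' L hL).2)

theorem IsCoherentSpace.finiteSubInters_compact_saturated (hcoh : IsCoherentSpace Y)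
    {𝒦 : Set (Set Y)} (h𝒦 : ∀ K ∈ 𝒦, IsCompact K ∧ IsSaturatedSet K) :
    ∀ S ∈ finiteSubInters 𝒦, IsCompact S ∧ IsSaturatedSet S := by
  rintro _ ⟨ℱ, hℱ, hfin, hne, rfl⟩
  have hℱ' : ∀ K ∈ ℱ, IsCompact K ∧ IsSaturatedSet K := fun K hK => h𝒦 K (hℱ hK)
  exact ⟨hcoh.isCompact_sInter hfin hne hℱ', isSaturatedSet_sInter fun K hK => (hℱ' K hK).2⟩

end

theorem stmt3_general {X : Type*} [TopologicalSpace X]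
    (hcoh : IsCoherentSpace X) (hwf : IsWellFilteredSpace X) : IsStrongRSpace X := by
  intro 𝒦 h𝒦 U hU hsub
  rcases 𝒦.eq_empty_or_nonempty with rfl | h𝒦ne
  · exact ⟨∅, empty_subset ∅, finite_empty, by simpa using hsub⟩
  obtain ⟨_, ⟨ℱ, hℱ, hfin, -, rfl⟩, hℱU⟩ :=
    hwf (finiteSubInters 𝒦) (h𝒦ne.mono (subset_finiteSubInters 𝒦))
      (hcoh.finiteSubInters_compact_saturated h𝒦) (finiteSubInters_filtered 𝒦) U hU
      ((sInter_finiteSubInters_subset 𝒦).trans hsub)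
  exact ⟨ℱ, hℱ, hfin, hℱU⟩

theorem stmt3 {X : Type*} [TopologicalSpace X] [T0Space X]
    (hcoh : IsCoherentSpace X) (hwf : IsWellFilteredSpace X) : IsStrongRSpace X :=
  stmt3_general hcoh hwf
end

section
/- For a topological space X, the following conditions are equivalent: (1) for each open set V and each filter basis 𝒰 of open sets (i.e., any two members of 𝒰 contain a common member of 𝒰) with ⋂𝒰 ⊆ V, there is U ∈ 𝒰 with U ⊆ V; (2) for each open set V and each family 𝒰 of open sets with ⋂𝒰 ⊆ V, there is a finite subfamily 𝒰₀ ⊆ 𝒰 with ⋂𝒰₀ ⊆ V; (3) for each open set V and each filter basis 𝒮 of saturated sets with ⋂𝒮 ⊆ V, there is S ∈ 𝒮 with S ⊆ V; (4) for each open set V and each family 𝒮 of saturated sets with ⋂𝒮 ⊆ V, there is a finite subfamily 𝒮₀ ⊆ 𝒮 with ⋂𝒮₀ ⊆ V; (5) every closed subset of X is the closure of a finite set. -/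
/-
Condition (1) forces every closed set `C` to be the closure of a finite subset: the open sets
`(closure F)ᶜ`, `F ⊆ C` finite, form a filter basis whose intersection misses `C`, so one of them
already lies in `Cᶜ`. Conversely, if `⋂₀ 𝒮 ⊆ V` and `Vᶜ = closure F` with `F` finite, then each
point of `F` is excluded by one member of `𝒮`; since saturated sets are closed under
generalization and every point outside `V` generalizes to a point of `F`, these finitely many
members have intersection inside `V`. The remaining implications come from open sets being
saturated and from a filter basis containing a lower bound for each of its finite subfamilies.
-/

theorem exists_mem_subset_sInter_of_finite {X : Type*} {𝒮 : Set (Set X)} (hne : 𝒮.Nonempty)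
    (hdir : ∀ S₁ ∈ 𝒮, ∀ S₂ ∈ 𝒮, ∃ S₃ ∈ 𝒮, S₃ ⊆ S₁ ∩ S₂) {𝒮₀ : Set (Set X)} (h𝒮₀ : 𝒮₀ ⊆ 𝒮)
    (hfin : 𝒮₀.Finite) : ∃ S ∈ 𝒮, S ⊆ ⋂₀ 𝒮₀ := by
  induction 𝒮₀, hfin using Set.Finite.induction_on with
  | empty =>
    obtain ⟨S, hS⟩ := hne
    exact ⟨S, hS, by simp⟩
  | @insert A 𝒯 _ _ ih =>
    obtain ⟨S, hS, hS𝒯⟩ := ih ((Set.subset_insert A 𝒯).trans h𝒮₀)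
    obtain ⟨C, hC, hCAS⟩ := hdir A (h𝒮₀ (Set.mem_insert A 𝒯)) S hS
    rw [Set.sInter_insert]
    exact ⟨C, hC, hCAS.trans (Set.inter_subset_inter_right A hS𝒯)⟩

section

variable {X : Type*} [TopologicalSpace X]

theorem IsOpen.isSaturatedSet {U : Set X} (hU : IsOpen U) : IsSaturatedSet U :=
  subset_antisymm (fun _ hx _ hW => hW.2 hx) (Set.sInter_subset_of_mem ⟨hU, subset_rfl⟩)

theorem IsSaturatedSet.mem_of_specializes {S : Set X} (hS : IsSaturatedSet S) {x y : X}
    (hxy : x ⤳ y) (hy : y ∈ S) : x ∈ S := by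
  rw [hS]
  exact fun U hU => hxy.mem_open hU.1 (hU.2 hy)

theorem Set.Finite.exists_specializes_of_mem_closure {F : Set X} (hF : F.Finite) {y : X}
    (hy : y ∈ closure F) : ∃ x ∈ F, x ⤳ y := by
  rw [← Set.biUnion_of_singleton F, hF.closure_biUnion] at hy
  simpa [specializes_iff_mem_closure] using hy

theorem isCoNoetherian_of_forall_directed_isOpen
    (h : ∀ V : Set X, IsOpen V → ∀ 𝒰 : Set (Set X), 𝒰.Nonempty → (∀ U ∈ 𝒰, IsOpen U) →
      (∀ U₁ ∈ 𝒰, ∀ U₂ ∈ 𝒰, ∃ U₃ ∈ 𝒰, U₃ ⊆ U₁ ∩ U₂) → ⋂₀ 𝒰 ⊆ V → ∃ U ∈ 𝒰, U ⊆ V) :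
    IsCoNoetherian X := by
  intro C hC
  set 𝒰 : Set (Set X) := (fun F => (closure F)ᶜ) '' {F | F ⊆ C ∧ F.Finite}
  have hne : 𝒰.Nonempty := ⟨_, ∅, ⟨Set.empty_subset C, Set.finite_empty⟩, rfl⟩
  have hopen : ∀ U ∈ 𝒰, IsOpen U := by
    rintro _ ⟨F, -, rfl⟩
    exact isClosed_closure.isOpen_compl
  have hdir : ∀ U₁ ∈ 𝒰, ∀ U₂ ∈ 𝒰, ∃ U₃ ∈ 𝒰, U₃ ⊆ U₁ ∩ U₂ := by
    rintro _ ⟨F, ⟨hFC, hF⟩, rfl⟩ _ ⟨G, ⟨hGC, hG⟩, rfl⟩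
    refine ⟨_, ⟨F ∪ G, ⟨Set.union_subset hFC hGC, hF.union hG⟩, rfl⟩, ?_⟩
    simp only [closure_union, Set.compl_union, subset_refl]
  have hcover : ⋂₀ 𝒰 ⊆ Cᶜ := fun y hy hyC =>
    hy _ ⟨{y}, ⟨Set.singleton_subset_iff.mpr hyC, Set.finite_singleton y⟩, rfl⟩
      (subset_closure rfl)
  obtain ⟨_, ⟨F, ⟨hFC, hF⟩, rfl⟩, hFC'⟩ := h Cᶜ hC.isOpen_compl 𝒰 hne hopen hdir hcover
  exact ⟨F, hF, subset_antisymm (Set.compl_subset_compl.mp hFC') (closure_minimal hFC hC)⟩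

theorem IsCoNoetherian.exists_finite_sInter_subset (hX : IsCoNoetherian X) {V : Set X}
    (hV : IsOpen V) {𝒮 : Set (Set X)} (h𝒮 : ∀ S ∈ 𝒮, IsSaturatedSet S) (hsub : ⋂₀ 𝒮 ⊆ V) :
    ∃ 𝒮₀ ⊆ 𝒮, 𝒮₀.Finite ∧ ⋂₀ 𝒮₀ ⊆ V := by
  obtain ⟨F, hF, hVF⟩ := hX Vᶜ hV.isClosed_compl
  have hexcl : ∀ x ∈ F, ∃ S ∈ 𝒮, x ∉ S := by
    intro x hx
    by_contra! hall
    exact (hVF ▸ subset_closure hx : x ∈ Vᶜ) (hsub hall)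
  choose! S hS𝒮 hxS using hexcl
  refine ⟨S '' F, Set.image_subset_iff.mpr hS𝒮, hF.image S, fun y hy => by_contra fun hyV => ?_⟩
  obtain ⟨x, hx, hxy⟩ := hF.exists_specializes_of_mem_closure (hVF ▸ hyV : y ∈ closure F)
  exact hxS x hx ((h𝒮 _ (hS𝒮 x hx)).mem_of_specializes hxy (hy _ ⟨x, hx, rfl⟩))

end

theorem stmt8 {X : Type*} [TopologicalSpace X] :
    List.TFAE [
      ∀ V : Set X, IsOpen V → ∀ 𝒰 : Set (Set X), 𝒰.Nonempty → (∀ U ∈ 𝒰, IsOpen U) →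
        (∀ U₁ ∈ 𝒰, ∀ U₂ ∈ 𝒰, ∃ U₃ ∈ 𝒰, U₃ ⊆ U₁ ∩ U₂) → ⋂₀ 𝒰 ⊆ V → ∃ U ∈ 𝒰, U ⊆ V,
      ∀ V : Set X, IsOpen V → ∀ 𝒰 : Set (Set X), (∀ U ∈ 𝒰, IsOpen U) → ⋂₀ 𝒰 ⊆ V →
        ∃ 𝒰₀ ⊆ 𝒰, 𝒰₀.Finite ∧ ⋂₀ 𝒰₀ ⊆ V,
      ∀ V : Set X, IsOpen V → ∀ 𝒮 : Set (Set X), 𝒮.Nonempty → (∀ S ∈ 𝒮, IsSaturatedSet S) →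
        (∀ S₁ ∈ 𝒮, ∀ S₂ ∈ 𝒮, ∃ S₃ ∈ 𝒮, S₃ ⊆ S₁ ∩ S₂) → ⋂₀ 𝒮 ⊆ V → ∃ S ∈ 𝒮, S ⊆ V,
      ∀ V : Set X, IsOpen V → ∀ 𝒮 : Set (Set X), (∀ S ∈ 𝒮, IsSaturatedSet S) → ⋂₀ 𝒮 ⊆ V →
        ∃ 𝒮₀ ⊆ 𝒮, 𝒮₀.Finite ∧ ⋂₀ 𝒮₀ ⊆ V,
      ∀ C : Set X, IsClosed C → ∃ F : Set X, F.Finite ∧ C = closure F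
    ] := by
  tfae_have 1 → 5 := isCoNoetherian_of_forall_directed_isOpen
  tfae_have 5 → 4 := fun h5 V hV 𝒮 h𝒮 hsub =>
    IsCoNoetherian.exists_finite_sInter_subset h5 hV h𝒮 hsub
  tfae_have 4 → 2 := fun h4 V hV 𝒰 h𝒰 hsub =>
    h4 V hV 𝒰 (fun U hU => (h𝒰 U hU).isSaturatedSet) hsub
  tfae_have 2 → 1 := by
    intro h2 V hV 𝒰 hne h𝒰 hdir hsub
    obtain ⟨𝒰₀, h𝒰₀, hfin, hsub₀⟩ := h2 V hV 𝒰 h𝒰 hsub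
    obtain ⟨U, hU, hU𝒰₀⟩ := exists_mem_subset_sInter_of_finite hne hdir h𝒰₀ hfin
    exact ⟨U, hU, hU𝒰₀.trans hsub₀⟩
  tfae_have 4 → 3 := by
    intro h4 V hV 𝒮 hne h𝒮 hdir hsub
    obtain ⟨𝒮₀, h𝒮₀, hfin, hsub₀⟩ := h4 V hV 𝒮 h𝒮 hsub
    obtain ⟨S, hS, hS𝒮₀⟩ := exists_mem_subset_sInter_of_finite hne hdir h𝒮₀ hfin
    exact ⟨S, hS, hS𝒮₀.trans hsub₀⟩
  tfae_have 3 → 1 := fun h3 V hV 𝒰 hne h𝒰 hdir hsub =>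
    h3 V hV 𝒰 hne (fun U hU => (h𝒰 U hU).isSaturatedSet) hdir hsub
  tfae_finish
end

section
/- Let P be a dcpo that has no infinite antichain. Then P endowed with the Scott topology is a co-Noetherian space. -/
/-!
Every element of a Scott-closed set `C` lies below a maximal element of `C`, by Zorn's lemma:
`C` is closed under directed suprema, so every chain in `C` has its supremum in `C`. The maximal
elements of `C` form an antichain, hence a finite set, and since `C` is a lower set it is the
closure of that set.
-/

open Topology

theorem DirSupClosed.exists_le_maximal {P : Type*} [PartialOrder P]
    (hchain : ∀ c : Set P, c.Nonempty → IsChain (· ≤ ·) c → ∃ a : P, IsLUB c a)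
    {C : Set P} (hC : DirSupClosed C) {x : P} (hx : x ∈ C) :
    ∃ m, x ≤ m ∧ Maximal (· ∈ C) m := by
  refine zorn_le_nonempty₀ C (fun c hcC hc y hy => ?_) x hx
  obtain ⟨a, ha⟩ := hchain c ⟨y, hy⟩ hc
  exact ⟨a, hC hcC ⟨y, hy⟩ hc.directedOn ha, fun z hz => ha.1 hz⟩

theorem Topology.IsScott.eq_closure_of_subset_lowerClosure {α : Type*} [Preorder α]
    [TopologicalSpace α] [IsScott α Set.univ] {C F : Set α} (hC : IsClosed C) (hFC : F ⊆ C)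
    (hCF : C ⊆ lowerClosure F) : C = closure F :=
  (hCF.trans IsScott.lowerClosure_subset_closure).antisymm (closure_minimal hFC hC)

theorem Topology.IsScott.eq_closure_setOf_maximal {P : Type*} [PartialOrder P]
    [TopologicalSpace P] [IsScott P Set.univ]
    (hchain : ∀ c : Set P, c.Nonempty → IsChain (· ≤ ·) c → ∃ a : P, IsLUB c a)
    {C : Set P} (hC : IsClosed C) : C = closure {m | Maximal (· ∈ C) m} := by
  refine eq_closure_of_subset_lowerClosure hC (fun m hm => hm.1) fun x hx => ?_
  obtain ⟨m, hxm, hm⟩ := (IsScott.dirSupClosed_of_isClosed hC).exists_le_maximal hchain hx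
  exact ⟨m, hm, hxm⟩

theorem stmt11 {P : Type*} [PartialOrder P]
    (hdcpo : ∀ D : Set P, D.Nonempty → DirectedOn (· ≤ ·) D → ∃ a : P, IsLUB D a)
    (hac : ∀ A : Set P, IsAntichain (· ≤ ·) A → A.Finite) :
    @IsCoNoetherian P (Topology.scott P Set.univ) := by
  let := Topology.scott P Set.univ
  have : IsScott P Set.univ := ⟨rfl⟩
  intro C hC
  exact ⟨_, hac _ (setOfPred_maximal_antichain _),
    IsScott.eq_closure_setOf_maximal (fun c hne hc => hdcpo c hne hc.directedOn) hC⟩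
end

section
/- Let (X, τ) be a topological space and τ^s the strong (Skula) topology of τ. Then (X, τ^s) is compact if and only if (X, τ) is both a Noetherian space and a co-Noetherian space. -/
/-! The `τ^s`-neighbourhoods of `x` are generated by its `τ`-neighbourhoods and `closure {x}`,
so an ultrafilter converges to `x` in `τ^s` iff it converges in `τ` and contains `closure {x}`.
If `τ` is Noetherian, the intersection `C₀` of the closed members of an ultrafilter `f` has
compact open complement, hence lies in `f`; if `τ` is co-Noetherian,
`C₀ = closure F = ⋃ x ∈ F, closure {x}` with `F` finite, so `closure {x} ∈ f` for some `x ∈ C₀`,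
and `f` converges to this `x`. Conversely, `τ`-open and `τ`-closed sets are `τ^s`-clopen, hence
`τ^s`-compact when `τ^s` is compact: open sets are then `τ`-compact, and a closed set `C`, covered
by the `τ^s`-open sets `closure {x}`, `x ∈ C`, is the closure of finitely many of its points. -/

open Filter Topology TopologicalSpace

section Skula

variable {X : Type*} [TopologicalSpace X]

lemma noetherianSpace_iff_forall_isOpen_isCompact :
    NoetherianSpace X ↔ ∀ U : Set X, IsOpen U → IsCompact U :=
  (noetherianSpace_iff_opens X).trans ⟨fun h U hU ↦ h ⟨U, hU⟩, fun h U ↦ h U U.2⟩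

lemma TopologicalSpace.NoetherianSpace.sInter_isClosed_mem [NoetherianSpace X] (f : Filter X) :
    ⋂₀ {C | IsClosed C ∧ C ∈ f} ∈ f := by
  rw [← compl_compl (⋂₀ _)]
  refine (NoetherianSpace.isCompact _).compl_mem_sets_of_nhdsWithin fun x hx ↦ ?_
  obtain ⟨C, hC, hCf, hxC⟩ : ∃ C, IsClosed C ∧ C ∈ f ∧ x ∉ C := by
    simpa [Set.mem_sInter] using hx
  exact ⟨Cᶜ, mem_nhdsWithin_of_mem_nhds (hC.isOpen_compl.mem_nhds hxC), by rwa [compl_compl]⟩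

lemma IsCoNoetherian.exists_closure_singleton_mem (hX : IsCoNoetherian X) (f : Ultrafilter X)
    {C : Set X} (hC : IsClosed C) (hCf : C ∈ f) :
    ∃ x ∈ C, closure {x} ∈ f := by
  obtain ⟨F, hF, rfl⟩ := hX C hC
  rw [← Set.biUnion_of_singleton F, hF.closure_biUnion, Ultrafilter.finite_biUnion_mem_iff hF]
    at hCf
  obtain ⟨x, hxF, hx⟩ := hCf
  exact ⟨x, subset_closure hxF, hx⟩

lemma skulaTop_le : skulaTop X ≤ ‹TopologicalSpace X› :=
  fun _ hU ↦ .basic _ (Or.inl hU)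

lemma IsClosed.isOpen_skulaTop {C : Set X} (hC : IsClosed C) : IsOpen[skulaTop X] C :=
  .basic _ (Or.inr hC)

lemma IsOpen.isClosed_skulaTop {U : Set X} (hU : IsOpen U) : IsClosed[skulaTop X] U :=
  (@isOpen_compl_iff X U (skulaTop X)).mp hU.isClosed_compl.isOpen_skulaTop

lemma nhds_skulaTop (x : X) : @nhds X (skulaTop X) x = 𝓝 x ⊓ 𝓟 (closure {x}) := by
  refine le_antisymm (le_inf (nhds_mono skulaTop_le) ?_) ?_
  · exact le_principal_iff.2 <|
      @IsOpen.mem_nhds X (skulaTop X) _ _ isClosed_closure.isOpen_skulaTop (subset_closure rfl)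
  · rw [skulaTop, nhds_generateFrom]
    refine le_iInf₂ fun s ⟨hxs, hs⟩ ↦ ?_
    rcases hs with hs | hs
    · exact inf_le_left.trans (le_principal_iff.2 (hs.mem_nhds hxs))
    · exact inf_le_right.trans (principal_mono.2 (closure_minimal (by simpa using hxs) hs))

lemma noetherianSpace_of_compactSpace_skulaTop (h : @CompactSpace X (skulaTop X)) :
    NoetherianSpace X :=
  (noetherianSpace_iff_opens X).2 fun U ↦ by
    simpa using @IsCompact.image X X (skulaTop X) _ U id
      (@IsClosed.isCompact X (skulaTop X) U h U.2.isClosed_skulaTop)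
      (continuous_id_of_le skulaTop_le)

lemma isCoNoetherian_of_compactSpace_skulaTop (h : @CompactSpace X (skulaTop X)) :
    IsCoNoetherian X := by
  intro C hC
  have hCc : @IsCompact X (skulaTop X) C :=
    @IsClosed.isCompact X (skulaTop X) C h (hC.mono skulaTop_le)
  obtain ⟨F, hFC, hF, hCF⟩ := @IsCompact.elim_finite_subcover_image X X (skulaTop X) C C
    (fun x ↦ closure {x}) hCc (fun _ _ ↦ isClosed_closure.isOpen_skulaTop)
    (fun x hx ↦ Set.mem_biUnion hx (subset_closure rfl))
  refine ⟨F, hF, (hCF.trans ?_).antisymm (closure_minimal hFC hC)⟩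
  exact Set.iUnion₂_subset fun x hx ↦ closure_mono (Set.singleton_subset_iff.2 hx)

lemma compactSpace_skulaTop [NoetherianSpace X] (hX : IsCoNoetherian X) :
    @CompactSpace X (skulaTop X) := by
  refine @CompactSpace.mk X (skulaTop X)
    ((@isCompact_iff_ultrafilter_le_nhds X (skulaTop X) Set.univ).2 fun f _ ↦ ?_)
  have hC₀ : IsClosed (⋂₀ {C | IsClosed C ∧ C ∈ (f : Filter X)}) :=
    isClosed_sInter fun C hC ↦ hC.1
  obtain ⟨x, hxC₀, hx⟩ :=
    hX.exists_closure_singleton_mem f hC₀ (NoetherianSpace.sInter_isClosed_mem (f : Filter X))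
  have hfx : ↑f ≤ 𝓝 x := Ultrafilter.clusterPt_iff.1 <| clusterPt_iff_forall_mem_closure.2
    fun s hs ↦ Set.mem_sInter.1 hxC₀ _ ⟨isClosed_closure, mem_of_superset hs subset_closure⟩
  exact ⟨x, trivial, (nhds_skulaTop x).symm ▸ le_inf hfx (le_principal_iff.2 hx)⟩

end Skula

theorem stmt12 {X : Type*} [TopologicalSpace X] :
    @CompactSpace X (skulaTop X) ↔
      ((∀ U : Set X, IsOpen U → IsCompact U) ∧ IsCoNoetherian X) := by
  rw [← noetherianSpace_iff_forall_isOpen_isCompact]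
  exact ⟨fun h ↦ ⟨noetherianSpace_of_compactSpace_skulaTop h,
    isCoNoetherian_of_compactSpace_skulaTop h⟩, fun ⟨_, hX⟩ ↦ compactSpace_skulaTop hX⟩
end

section
/- Let (X, τ) be a T0 Noetherian topological space. Then X is co-Noetherian if and only if X is open well-filtered. -/
/-!
In a Noetherian space every inclusion of open sets is `≪`, so a `≪`-filtered family is just a
down-directed family of open sets. If `X` is co-Noetherian, write `Uᶜ = closure F` with `F`
finite: as `F` misses `⋂₀ ℱ`, directedness gives a single `V ∈ ℱ` missing `F`, hence `V ⊆ U`.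
Conversely, if `t` is irreducible closed, the open sets meeting `t` form a `≪`-filtered family;
without a generic point of `t` its intersection misses `t`, contradicting open well-filteredness.
So `X` is quasi-sober, and a closed set, being a finite union of irreducible closed sets, is the
closure of their finitely many generic points.
-/

open TopologicalSpace

section WayBelowOpen

variable {Y : Type*} [TopologicalSpace Y]

theorem wayBelowOpen_of_subset [NoetherianSpace Y] {V W : Set Y} (h : V ⊆ W) :
    wayBelowOpen V W := by
  intro 𝒞 h𝒞 hcov
  rw [Set.sUnion_eq_biUnion] at hcov
  obtain ⟨𝒟, h𝒟, h𝒟fin, hV⟩ :=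
    (NoetherianSpace.isCompact V).elim_finite_subcover_image h𝒞 (h.trans hcov)
  exact ⟨𝒟, h𝒟, h𝒟fin, Set.sUnion_eq_biUnion ▸ hV⟩

theorem wayBelowOpen.subset {V W : Set Y} (hW : IsOpen W) (h : wayBelowOpen V W) : V ⊆ W := by
  obtain ⟨𝒟, h𝒟, -, hV⟩ := h {W} (by simpa using hW) (by simp)
  exact hV.trans (Set.sUnion_subset fun D hD => (h𝒟 hD).le)

theorem directedOn_superset_of_wayBelowOpen {ℱ : Set (Set Y)} (hopen : ∀ W ∈ ℱ, IsOpen W)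
    (hfil : ∀ U₁ ∈ ℱ, ∀ U₂ ∈ ℱ, ∃ U₃ ∈ ℱ, wayBelowOpen U₃ U₁ ∧ wayBelowOpen U₃ U₂) :
    DirectedOn (· ⊇ ·) ℱ := fun U₁ h₁ U₂ h₂ =>
  let ⟨U₃, h₃, hw₁, hw₂⟩ := hfil U₁ h₁ U₂ h₂
  ⟨U₃, h₃, hw₁.subset (hopen U₁ h₁), hw₂.subset (hopen U₂ h₂)⟩

end WayBelowOpen

theorem DirectedOn.exists_mem_disjoint_of_finite_of_disjoint_sInter {α : Type*}
    {ℱ : Set (Set α)} (hne : ℱ.Nonempty) (hdir : DirectedOn (· ⊇ ·) ℱ) {F : Set α}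
    (hF : F.Finite) (h : Disjoint F (⋂₀ ℱ)) : ∃ V ∈ ℱ, Disjoint F V := by
  have hdir' : DirectedOn (· ⊆ ·) (compl '' ℱ) :=
    directedOn_image.2 fun U₁ h₁ U₂ h₂ =>
      let ⟨U₃, h₃, h₁₃, h₂₃⟩ := hdir U₁ h₁ U₂ h₂
      ⟨U₃, h₃, Set.compl_subset_compl.2 h₁₃, Set.compl_subset_compl.2 h₂₃⟩
  have hcov : F ⊆ ⋃₀ (compl '' ℱ) := by
    rw [← Set.compl_sInter]
    exact h.subset_compl_right
  obtain ⟨_, ⟨V, hV, rfl⟩, hFV⟩ :=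
    hdir'.exists_mem_subset_of_finite_of_subset_sUnion (hne.image _) hF hcov
  exact ⟨V, hV, Set.subset_compl_iff_disjoint_right.1 hFV⟩

theorem IsCoNoetherian.isOpenWellFiltered {X : Type*} [TopologicalSpace X]
    (hX : IsCoNoetherian X) : IsOpenWellFiltered X := by
  intro ℱ hne hopen hfil U hU hsub
  obtain ⟨F, hF, hUc⟩ := hX Uᶜ hU.isClosed_compl
  have hFU : Disjoint F U := Set.subset_compl_iff_disjoint_right.1 (hUc ▸ subset_closure)
  obtain ⟨V, hV, hFV⟩ := (directedOn_superset_of_wayBelowOpen hopen hfil)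
    |>.exists_mem_disjoint_of_finite_of_disjoint_sInter hne hF (hFU.mono_right hsub)
  have hUV : Uᶜ ⊆ Vᶜ :=
    hUc ▸ closure_minimal (Set.subset_compl_iff_disjoint_right.2 hFV) (hopen V hV).isClosed_compl
  exact ⟨V, hV, Set.compl_subset_compl.1 hUV⟩

theorem IsOpenWellFiltered.quasiSober {X : Type*} [TopologicalSpace X] [NoetherianSpace X]
    (hX : IsOpenWellFiltered X) : QuasiSober X := by
  refine ⟨fun {t} ht htcl => ?_⟩
  by_contra! hng
  let ℱ : Set (Set X) := {V | IsOpen V ∧ (t ∩ V).Nonempty}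
  have hfil : ∀ U₁ ∈ ℱ, ∀ U₂ ∈ ℱ, ∃ U₃ ∈ ℱ, wayBelowOpen U₃ U₁ ∧ wayBelowOpen U₃ U₂ :=
    fun U₁ h₁ U₂ h₂ => ⟨U₁ ∩ U₂, ⟨h₁.1.inter h₂.1, ht.2 U₁ U₂ h₁.1 h₂.1 h₁.2 h₂.2⟩,
      wayBelowOpen_of_subset Set.inter_subset_left, wayBelowOpen_of_subset Set.inter_subset_right⟩
  have hsInter : ⋂₀ ℱ ⊆ tᶜ := by
    intro x hx hxt
    have hxt' : closure {x} ⊂ t :=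
      (closure_minimal (Set.singleton_subset_iff.2 hxt) htcl).ssubset_of_ne (hng x)
    obtain ⟨y, hyt, hyx⟩ := Set.exists_of_ssubset hxt'
    exact hx (closure {x})ᶜ ⟨isClosed_closure.isOpen_compl, y, hyt, hyx⟩ (subset_closure rfl)
  obtain ⟨V, ⟨-, y, hyt, hyV⟩, hVt⟩ := hX ℱ ⟨Set.univ, isOpen_univ, by simpa using ht.nonempty⟩
    (fun W hW => hW.1) hfil tᶜ htcl.isOpen_compl hsInter
  exact hVt hyV hyt

theorem isCoNoetherian_of_quasiSober {X : Type*} [TopologicalSpace X] [NoetherianSpace X]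
    [QuasiSober X] : IsCoNoetherian X := by
  intro C hC
  obtain ⟨S, hS, hScl, hSirr, rfl⟩ := NoetherianSpace.exists_finite_set_isClosed_irreducible hC
  have := hS.to_subtype
  choose g hg using fun t : S => QuasiSober.sober (hSirr t t.2) (hScl t t.2)
  refine ⟨Set.range g, Set.finite_range g, ?_⟩
  rw [← Set.iUnion_singleton_eq_range, closure_iUnion_of_finite, Set.sUnion_eq_iUnion]
  exact Set.iUnion_congr fun t => (hg t).symm

theorem stmt13_general {X : Type*} [TopologicalSpace X]
    (hNoeth : ∀ U : Set X, IsOpen U → IsCompact U) :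
    IsCoNoetherian X ↔ IsOpenWellFiltered X := by
  have : NoetherianSpace X := (noetherianSpace_iff_opens X).2 fun U => hNoeth U U.2
  refine ⟨IsCoNoetherian.isOpenWellFiltered, fun hX => ?_⟩
  have := hX.quasiSober
  exact isCoNoetherian_of_quasiSober

theorem stmt13 {X : Type*} [TopologicalSpace X] [T0Space X]
    (hNoeth : ∀ U : Set X, IsOpen U → IsCompact U) :
    IsCoNoetherian X ↔ IsOpenWellFiltered X :=
  stmt13_general hNoeth
end

section
/- Let X be a co-Noetherian topological space, A a saturated subset of X, and C a closed subset of X. Then both A and C, endowed with the subspace topology, are co-Noetherian spaces. -/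
/-
A closed subset of a subspace `A` is the trace `A ∩ D` of a closed set `D = closure G` of `X`
with `G` finite. If `A` is closed, `A ∩ D` is itself the closure of a finite set. If `A` is
saturated, i.e. an upper set for specialization, every point of `A ∩ D` lies below some point
of `G`, which then lies in `A`, so `A ∩ D` is the trace of `closure (A ∩ G)`.
-/

open Set

section

variable {X : Type*} [TopologicalSpace X]

theorem Set.Finite.exists_specializes_of_mem_closure_s17 {G : Set X} (hG : G.Finite) {x : X}
    (hx : x ∈ closure G) : ∃ a ∈ G, a ⤳ x := by
  rw [← biUnion_of_singleton G, hG.closure_biUnion] at hx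
  obtain ⟨a, haG, hxa⟩ := mem_iUnion₂.1 hx
  exact ⟨a, haG, specializes_iff_mem_closure.2 hxa⟩

theorem IsSaturatedSet.stableUnderGeneralization {A : Set X} (hA : IsSaturatedSet A) :
    StableUnderGeneralization A := by
  rw [hA]
  exact stableUnderGeneralization_sInter _ fun _ hU ↦ hU.1.stableUnderGeneralization

theorem isCoNoetherian_subspace_of_forall_isClosed {A : Set X}
    (h : ∀ D, IsClosed D → ∃ G ⊆ A, G.Finite ∧ A ∩ D = A ∩ closure G) :
    IsCoNoetherian A := by
  intro E hE
  obtain ⟨D, hD, rfl⟩ := isClosed_induced_iff.1 hE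
  obtain ⟨G, hGA, hG, hDG⟩ := h D hD
  refine ⟨(↑) ⁻¹' G, hG.preimage Subtype.val_injective.injOn, ?_⟩
  rw [Topology.IsInducing.subtypeVal.closure_eq_preimage_closure_image, Subtype.image_preimage_coe,
    inter_eq_right.2 hGA, Subtype.preimage_coe_eq_preimage_coe_iff]
  exact hDG

namespace IsCoNoetherian

theorem subspace_of_isClosed (hX : IsCoNoetherian X) {C : Set X} (hC : IsClosed C) :
    IsCoNoetherian C := by
  refine isCoNoetherian_subspace_of_forall_isClosed fun D hD ↦ ?_
  obtain ⟨G, hG, hCD⟩ := hX (C ∩ D) (hC.inter hD)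
  refine ⟨G, (hCD ▸ subset_closure).trans inter_subset_left, hG, ?_⟩
  rw [← hCD, ← inter_assoc, inter_self]

theorem subspace_of_stableUnderGeneralization (hX : IsCoNoetherian X) {A : Set X}
    (hA : StableUnderGeneralization A) : IsCoNoetherian A := by
  refine isCoNoetherian_subspace_of_forall_isClosed fun D hD ↦ ?_
  obtain ⟨G, hG, rfl⟩ := hX D hD
  refine ⟨A ∩ G, inter_subset_left, hG.inter_of_right A, subset_antisymm ?_
    (inter_subset_inter_right _ (closure_mono inter_subset_right))⟩
  rintro x ⟨hxA, hx⟩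
  obtain ⟨a, haG, hax⟩ := hG.exists_specializes_of_mem_closure_s17 hx
  exact ⟨hxA, hax.mem_closed isClosed_closure (subset_closure ⟨hA hax hxA, haG⟩)⟩

end IsCoNoetherian

end

theorem stmt17 {X : Type*} [TopologicalSpace X] (hX : IsCoNoetherian X)
    (A C : Set X) (hA : IsSaturatedSet A) (hC : IsClosed C) :
    IsCoNoetherian A ∧ IsCoNoetherian C :=
  ⟨hX.subspace_of_stableUnderGeneralization hA.stableUnderGeneralization,
    hX.subspace_of_isClosed hC⟩
end

section
/- Let (X, τ) be a T0 co-Noetherian topological space, and equip X with its specialization order (x ≤ y iff x lies in the closure of {y}). Then (X, ≤) is a dcpo in which every antichain has a cover, i.e., (X, ≤) is a controllable dcpo. -/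
/-!
In a co-Noetherian space every closed set is `closure F = ⋃ f ∈ F, closure {f}` for a finite `F`,
so an irreducible closed set is the closure of one of these points: the space is quasi-sober.
A directed set is irreducible, and a generic point of its closure is its supremum.
An inclusion-minimal finite `M` with `closure M = closure C` is an antichain,
and it is a cover of `C` since, for finite `G`, `C ⊆ ↓G` iff `closure C ⊆ closure G`.
-/

section

variable {X : Type*} [TopologicalSpace X]

theorem Set.Finite.closure_eq_biUnion_closure_singleton {F : Set X} (hF : F.Finite) :
    closure F = ⋃ f ∈ F, closure {f} := by
  conv_lhs => rw [← Set.biUnion_of_singleton F]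
  exact hF.closure_biUnion _

theorem specLowerClosure_eq_closure {F : Set X} (hF : F.Finite) :
    specLowerClosure F = closure F := by
  ext x
  simp [specLowerClosure, specLE, hF.closure_eq_biUnion_closure_singleton]

theorem DirectedOn.isPreirreducible_of_specLE {D : Set X} (hD : DirectedOn specLE D) :
    IsPreirreducible D := by
  rintro u v hu hv ⟨a, haD, hau⟩ ⟨b, hbD, hbv⟩
  obtain ⟨c, hcD, hac, hbc⟩ := hD a haD b hbD
  exact ⟨c, hcD, specializes_iff_forall_open.1 (specializes_iff_mem_closure.2 hac) u hu hau,
    specializes_iff_forall_open.1 (specializes_iff_mem_closure.2 hbc) v hv hbv⟩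

theorem IsCoNoetherian.quasiSober (h : IsCoNoetherian X) : QuasiSober X where
  sober {S} hS hSc := by
    obtain ⟨F, hF, rfl⟩ := h S hSc
    have hcover : closure F ⊆ ⋃₀ ↑(hF.toFinset.image fun f => closure {f}) := by
      simp [hF.closure_eq_biUnion_closure_singleton]
    obtain ⟨_, hz, hFz⟩ := isIrreducible_iff_sUnion_isClosed.1 hS _ (by simp) hcover
    obtain ⟨f, hf, rfl⟩ := Finset.mem_image.1 hz
    exact ⟨f, (closure_mono (Set.singleton_subset_iff.2 (hF.mem_toFinset.1 hf))).antisymm hFz⟩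

theorem IsGenericPoint.isLUB_specLE {x : X} {D : Set X} (hx : IsGenericPoint x (closure D)) :
    (∀ d ∈ D, specLE d x) ∧ ∀ b : X, (∀ d ∈ D, specLE d b) → specLE x b :=
  ⟨fun _ hd => hx.def.superset (subset_closure hd),
    fun _ hb => closure_minimal hb isClosed_closure hx.mem⟩

theorem Set.Finite.exists_subset_isAntichain_specLE_closure_eq {F : Set X} (hF : F.Finite) :
    ∃ M ⊆ F, IsAntichain specLE M ∧ closure M = closure F := by
  let 𝒢 : Set (Set X) := {G | G ⊆ F ∧ closure G = closure F}
  have h𝒢 : 𝒢.Finite := hF.finite_subsets.subset fun _ hG => hG.1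
  obtain ⟨M, ⟨hMF, hMcl⟩, hmin⟩ := h𝒢.exists_minimal ⟨F, subset_rfl, rfl⟩
  refine ⟨M, hMF, fun a ha b hb hab hle => ?_, hMcl⟩
  have hsub : M ⊆ closure (M \ {a}) := by
    intro y hy
    rcases eq_or_ne y a with rfl | hya
    · exact closure_mono (Set.singleton_subset_iff.2 (show b ∈ M \ {y} from ⟨hb, hab.symm⟩)) hle
    · exact subset_closure ⟨hy, hya⟩
  have hcl : closure (M \ {a}) = closure F :=
    hMcl ▸ (closure_mono Set.sdiff_subset).antisymm (closure_minimal hsub isClosed_closure)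
  exact (hmin ⟨Set.sdiff_subset.trans hMF, hcl⟩ Set.sdiff_subset ha).2 rfl

end

theorem stmt19_general {X : Type*} [TopologicalSpace X]
    (h : IsCoNoetherian X) :
    (∀ D : Set X, D.Nonempty → (∀ a ∈ D, ∀ b ∈ D, ∃ c ∈ D, specLE a c ∧ specLE b c) →
      ∃ s : X, (∀ d ∈ D, specLE d s) ∧ ∀ b : X, (∀ d ∈ D, specLE d b) → specLE s b) ∧
    (∀ C : Set X, IsAntichain specLE C → ∃ F : Set X, F.Finite ∧ IsAntichain specLE F ∧
      C ⊆ specLowerClosure F ∧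
      ∀ G : Set X, G.Finite → C ⊆ specLowerClosure G → F ⊆ specLowerClosure G) := by
  refine ⟨fun D hne hdir => ?_, fun C _ => ?_⟩
  · have := h.quasiSober
    have hD : IsIrreducible D := ⟨hne, DirectedOn.isPreirreducible_of_specLE hdir⟩
    exact ⟨_, hD.isGenericPoint_genericPoint_closure.isLUB_specLE⟩
  · obtain ⟨F, hF, hCF⟩ := h (closure C) isClosed_closure
    obtain ⟨M, hMF, hM, hMC⟩ := hF.exists_subset_isAntichain_specLE_closure_eq
    rw [← hCF] at hMC
    have hMfin : M.Finite := hF.subset hMF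
    refine ⟨M, hMfin, hM, ?_, fun G hG hCG => ?_⟩
    · rw [specLowerClosure_eq_closure hMfin, hMC]
      exact subset_closure
    · rw [specLowerClosure_eq_closure hG] at hCG ⊢
      exact subset_closure.trans (hMC ▸ closure_minimal hCG isClosed_closure)

theorem stmt19 {X : Type*} [TopologicalSpace X] [T0Space X]
    (h : IsCoNoetherian X) :
    (∀ D : Set X, D.Nonempty → (∀ a ∈ D, ∀ b ∈ D, ∃ c ∈ D, specLE a c ∧ specLE b c) →
      ∃ s : X, (∀ d ∈ D, specLE d s) ∧ ∀ b : X, (∀ d ∈ D, specLE d b) → specLE s b) ∧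
    (∀ C : Set X, IsAntichain specLE C → ∃ F : Set X, F.Finite ∧ IsAntichain specLE F ∧
      C ⊆ specLowerClosure F ∧
      ∀ G : Set X, G.Finite → C ⊆ specLowerClosure G → F ⊆ specLowerClosure G) :=
  stmt19_general h
end
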